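/- Let K be an invertible 3×3 real matrix whose third row is (0,0,1), D = diag(1,1,−1), C = K⁻ᵀ D K⁻¹, S = K D K⁻¹. Let x₁ ≠ x₂ be affine image points in ℝ² with lifts x̂₁, x̂₂, let θ be the angle between the rays K⁻¹x̂₁, K⁻¹x̂₂, and let l₁ = C S x̂₁, l₂ = C S x̂₂ be their reflected polars. Suppose the line through x₁ and x₂ meets l₁ at a point x₁′ and meets l₂ at a point x₂′. Then cos²θ = (‖x₂ − x₁′‖ · ‖x₁ − x₂′‖) / (‖x₁ − x₁′‖ · ‖x₂ − x₂′‖), the cross-ratio of the collinear points x₁, x₂, x₁′, x₂′. -/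

import Mathlib

/-!
Since `D² = 1`, the product `C S` collapses to `K⁻ᵀ K⁻¹`, so the reflected polar of `x` evaluated
at `y` is the inner product `⟨K⁻¹x̂, K⁻¹ŷ⟩` of the back-projected rays. Writing `u = K⁻¹x̂₁`,
`v = K⁻¹x̂₂` and parametrising the line as `x₁ + t (x₂ - x₁)`, the lift is affine in `t`, so the
incidence conditions become `⟨u, u⟩ + t₁ ⟨u, v - u⟩ = 0` and `⟨v, u⟩ + t₂ ⟨v, v - u⟩ = 0`.
Solving for `t₁, t₂`, the cross-ratio `|1 - t₁| |t₂| / (|t₁| |1 - t₂|)` equals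
`⟨u, v⟩² / (⟨u, u⟩ ⟨v, v⟩) = cos² θ`.
-/

open Matrix

/-- The homogeneous lift `(y₁, y₂, 1)` of an affine image point `y ∈ ℝ²`. -/
def homLift (y : EuclideanSpace ℝ (Fin 2)) : Fin 3 → ℝ := ![y 0, y 1, 1]

theorem diagonal_one_one_neg_one_mul_self :
    diagonal ![(1 : ℝ), 1, -1] * diagonal ![1, 1, -1] = 1 := by
  rw [diagonal_mul_diagonal, ← diagonal_one]
  congr 1
  ext i
  fin_cases i <;> simp

section ReflectedPolar

variable {n R : Type*} [Fintype n] [DecidableEq n] [CommRing R]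

theorem polar_mul_conj_eq_inv_transpose_mul_inv {K D : Matrix n n R} (hK : IsUnit K.det)
    (hD : D * D = 1) : (Kᵀ)⁻¹ * D * K⁻¹ * (K * D * K⁻¹) = (K⁻¹)ᵀ * K⁻¹ := by
  rw [transpose_nonsing_inv]
  simp only [Matrix.mul_assoc]
  rw [← Matrix.mul_assoc K⁻¹ K, nonsing_inv_mul K hK, Matrix.one_mul, ← Matrix.mul_assoc D D, hD,
    Matrix.one_mul]

theorem reflectedPolar_dotProduct {K D : Matrix n n R} (hK : IsUnit K.det) (hD : D * D = 1)
    (p w : n → R) :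
    ((Kᵀ)⁻¹ * D * K⁻¹) *ᵥ ((K * D * K⁻¹) *ᵥ p) ⬝ᵥ w = (K⁻¹ *ᵥ p) ⬝ᵥ (K⁻¹ *ᵥ w) := by
  rw [mulVec_mulVec, polar_mul_conj_eq_inv_transpose_mul_inv hK hD, ← mulVec_mulVec,
    mulVec_transpose, ← dotProduct_mulVec]

theorem mulVec_inv_ne_zero {K : Matrix n n R} (hK : IsUnit K.det) {v : n → R} (hv : v ≠ 0) :
    K⁻¹ *ᵥ v ≠ 0 := by
  intro h
  apply hv
  rw [← one_mulVec v, ← mul_nonsing_inv K hK, ← mulVec_mulVec, h, mulVec_zero]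

end ReflectedPolar

theorem homLift_ne_zero (y : EuclideanSpace ℝ (Fin 2)) : homLift y ≠ 0 :=
  fun h => by simpa [homLift] using congrFun h 2

theorem homLift_add_smul_sub (x₁ x₂ : EuclideanSpace ℝ (Fin 2)) (t : ℝ) :
    homLift (x₁ + t • (x₂ - x₁)) = homLift x₁ + t • (homLift x₂ - homLift x₁) := by
  funext i
  fin_cases i <;> simp [homLift]

theorem cos_sq_angle_toLp {ι : Type*} [Fintype ι] (u v : ι → ℝ) :
    Real.cos (InnerProductGeometry.angle (WithLp.toLp 2 u) (WithLp.toLp 2 v)) ^ 2 =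
      (u ⬝ᵥ v) ^ 2 / ((u ⬝ᵥ u) * (v ⬝ᵥ v)) := by
  have hinner (p q : ι → ℝ) : inner ℝ (WithLp.toLp 2 p) (WithLp.toLp 2 q) = p ⬝ᵥ q := by
    rw [EuclideanSpace.inner_toLp_toLp, star_trivial, dotProduct_comm]
  rw [InnerProductGeometry.cos_angle, div_pow, mul_pow, hinner, ← real_inner_self_eq_norm_sq,
    ← real_inner_self_eq_norm_sq, hinner, hinner]

section Line

variable {E : Type*} [NormedAddCommGroup E] [NormedSpace ℝ E]

theorem norm_sub_add_smul_sub_left (x₁ x₂ : E) (t : ℝ) :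
    ‖x₁ - (x₁ + t • (x₂ - x₁))‖ = |t| * ‖x₂ - x₁‖ := by
  rw [sub_add_cancel_left, norm_neg, norm_smul, Real.norm_eq_abs]

theorem norm_sub_add_smul_sub_right (x₁ x₂ : E) (t : ℝ) :
    ‖x₂ - (x₁ + t • (x₂ - x₁))‖ = |1 - t| * ‖x₂ - x₁‖ := by
  rw [← Real.norm_eq_abs, ← norm_smul, sub_smul, one_smul]
  congr 1
  abel

theorem cross_ratio_add_smul_sub {x₁ x₂ : E} (hx : x₁ ≠ x₂) (t₁ t₂ : ℝ) :
    ‖x₂ - (x₁ + t₁ • (x₂ - x₁))‖ * ‖x₁ - (x₁ + t₂ • (x₂ - x₁))‖ /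
        (‖x₁ - (x₁ + t₁ • (x₂ - x₁))‖ * ‖x₂ - (x₁ + t₂ • (x₂ - x₁))‖) =
      |1 - t₁| * |t₂| / (|t₁| * |1 - t₂|) := by
  have hd : ‖x₂ - x₁‖ ≠ 0 := norm_ne_zero_iff.mpr (sub_ne_zero.mpr hx.symm)
  simp only [norm_sub_add_smul_sub_left, norm_sub_add_smul_sub_right]
  rw [mul_mul_mul_comm, mul_mul_mul_comm |t₁|, mul_div_mul_right _ _ (mul_ne_zero hd hd)]

end Line

theorem cross_ratio_of_incidence {a b c t₁ t₂ : ℝ} (ha : 0 < a) (hb : 0 < b)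
    (h₁ : a + t₁ * (c - a) = 0) (h₂ : c + t₂ * (b - c) = 0) :
    |1 - t₁| * |t₂| / (|t₁| * |1 - t₂|) = c ^ 2 / (a * b) := by
  have hac : a - c ≠ 0 := fun h => by
    rw [show c = a by linarith, sub_self, mul_zero, add_zero] at h₁; linarith
  have hcb : c - b ≠ 0 := fun h => by
    rw [show c = b by linarith, sub_self, mul_zero, add_zero] at h₂; linarith
  have ht₁ : t₁ = a / (a - c) := by rw [eq_div_iff hac]; linarith
  have ht₂ : t₂ = c / (c - b) := by rw [eq_div_iff hcb]; linarith
  have h1t₁ : 1 - t₁ = -c / (a - c) := by rw [ht₁]; field_simp; ring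
  have h1t₂ : 1 - t₂ = -b / (c - b) := by rw [ht₂]; field_simp; ring
  rw [h1t₁, h1t₂, ht₁, ht₂, abs_div, abs_div, abs_div, abs_div, abs_neg, abs_neg,
    abs_of_pos ha, abs_of_pos hb, ← sq_abs c]
  field_simp

theorem reflectedPolar_dotProduct_homLift_add_smul_sub {K D : Matrix (Fin 3) (Fin 3) ℝ}
    (hK : IsUnit K.det) (hD : D * D = 1) (p : Fin 3 → ℝ) (x₁ x₂ : EuclideanSpace ℝ (Fin 2))
    (t : ℝ) :
    ((Kᵀ)⁻¹ * D * K⁻¹) *ᵥ ((K * D * K⁻¹) *ᵥ p) ⬝ᵥ homLift (x₁ + t • (x₂ - x₁)) =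
      (K⁻¹ *ᵥ p) ⬝ᵥ (K⁻¹ *ᵥ homLift x₁) +
        t * ((K⁻¹ *ᵥ p) ⬝ᵥ (K⁻¹ *ᵥ homLift x₂) - (K⁻¹ *ᵥ p) ⬝ᵥ (K⁻¹ *ᵥ homLift x₁)) := by
  rw [reflectedPolar_dotProduct hK hD, homLift_add_smul_sub, mulVec_add, mulVec_smul, mulVec_sub,
    dotProduct_add, dotProduct_smul, dotProduct_sub, smul_eq_mul]

theorem cos_sq_angle_eq_cross_ratio_general (K : Matrix (Fin 3) (Fin 3) ℝ)
    (hK : IsUnit K.det)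
    (D C S : Matrix (Fin 3) (Fin 3) ℝ)
    (hD : D = Matrix.diagonal ![1, 1, -1])
    (hC : C = (Kᵀ)⁻¹ * D * K⁻¹)
    (hS : S = K * D * K⁻¹)
    (x₁ x₂ x₁' x₂' : EuclideanSpace ℝ (Fin 2)) (hx : x₁ ≠ x₂)
    (l₁ l₂ : Fin 3 → ℝ)
    (hl₁ : l₁ = C.mulVec (S.mulVec (homLift x₁)))
    (hl₂ : l₂ = C.mulVec (S.mulVec (homLift x₂)))
    (hx₁'mem : ∃ t : ℝ, x₁' = x₁ + t • (x₂ - x₁))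
    (hx₁'on : l₁ ⬝ᵥ homLift x₁' = 0)
    (hx₂'mem : ∃ t : ℝ, x₂' = x₁ + t • (x₂ - x₁))
    (hx₂'on : l₂ ⬝ᵥ homLift x₂' = 0)
    (θ : ℝ)
    (hθ : θ = InnerProductGeometry.angle
        ((WithLp.equiv 2 (Fin 3 → ℝ)).symm (K⁻¹.mulVec (homLift x₁)))
        ((WithLp.equiv 2 (Fin 3 → ℝ)).symm (K⁻¹.mulVec (homLift x₂)))) :
    Real.cos θ ^ 2 =
      (‖x₂ - x₁'‖ * ‖x₁ - x₂'‖) / (‖x₁ - x₁'‖ * ‖x₂ - x₂'‖) := by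
  obtain ⟨t₁, rfl⟩ := hx₁'mem
  obtain ⟨t₂, rfl⟩ := hx₂'mem
  subst hl₁ hl₂ hC hS hθ
  have hD2 : D * D = 1 := hD ▸ diagonal_one_one_neg_one_mul_self
  rw [reflectedPolar_dotProduct_homLift_add_smul_sub hK hD2] at hx₁'on hx₂'on
  set u₁ := K⁻¹ *ᵥ homLift x₁
  set u₂ := K⁻¹ *ᵥ homLift x₂
  have hpos (y : EuclideanSpace ℝ (Fin 2)) : 0 < (K⁻¹ *ᵥ homLift y) ⬝ᵥ (K⁻¹ *ᵥ homLift y) := by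
    simpa using dotProduct_self_star_pos_iff.mpr (mulVec_inv_ne_zero hK (homLift_ne_zero y))
  rw [dotProduct_comm u₂ u₁] at hx₂'on
  calc Real.cos _ ^ 2 = (u₁ ⬝ᵥ u₂) ^ 2 / ((u₁ ⬝ᵥ u₁) * (u₂ ⬝ᵥ u₂)) := cos_sq_angle_toLp u₁ u₂
    _ = |1 - t₁| * |t₂| / (|t₁| * |1 - t₂|) :=
      (cross_ratio_of_incidence (hpos x₁) (hpos x₂) hx₁'on hx₂'on).symm
    _ = _ := (cross_ratio_add_smul_sub hx t₁ t₂).symm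

/-- Cross-ratio form of the angle formula: if the line through `x₁, x₂` meets the
reflected polars `l₁ = C S x̂₁` and `l₂ = C S x̂₂` at `x₁′` and `x₂′` respectively,
then `cos²θ = (|x₂x₁′|·|x₁x₂′|)/(|x₁x₁′|·|x₂x₂′|)`. -/
theorem cos_sq_angle_eq_cross_ratio (K : Matrix (Fin 3) (Fin 3) ℝ)
    (hK : IsUnit K.det) (hKrow : K 2 = ![0, 0, 1])
    (D C S : Matrix (Fin 3) (Fin 3) ℝ)
    (hD : D = Matrix.diagonal ![1, 1, -1])
    (hC : C = (Kᵀ)⁻¹ * D * K⁻¹)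
    (hS : S = K * D * K⁻¹)
    (x₁ x₂ x₁' x₂' : EuclideanSpace ℝ (Fin 2)) (hx : x₁ ≠ x₂)
    (l₁ l₂ : Fin 3 → ℝ)
    (hl₁ : l₁ = C.mulVec (S.mulVec (homLift x₁)))
    (hl₂ : l₂ = C.mulVec (S.mulVec (homLift x₂)))
    (hx₁'mem : ∃ t : ℝ, x₁' = x₁ + t • (x₂ - x₁))
    (hx₁'on : l₁ ⬝ᵥ homLift x₁' = 0)
    (hx₂'mem : ∃ t : ℝ, x₂' = x₁ + t • (x₂ - x₁))
    (hx₂'on : l₂ ⬝ᵥ homLift x₂' = 0)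
    (θ : ℝ)
    (hθ : θ = InnerProductGeometry.angle
        ((WithLp.equiv 2 (Fin 3 → ℝ)).symm (K⁻¹.mulVec (homLift x₁)))
        ((WithLp.equiv 2 (Fin 3 → ℝ)).symm (K⁻¹.mulVec (homLift x₂)))) :
    Real.cos θ ^ 2 =
      (‖x₂ - x₁'‖ * ‖x₁ - x₂'‖) / (‖x₁ - x₁'‖ * ‖x₂ - x₂'‖) :=
  cos_sq_angle_eq_cross_ratio_general K hK D C S hD hC hS x₁ x₂ x₁' x₂' hx l₁ l₂ hl₁ hl₂ hx₁'mem
    hx₁'on hx₂'mem hx₂'on θ hθ
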